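/- Knot insertion preserves the B-spline curve: let p ≥ 1 be an integer, u₁ ≤ … ≤ u_{l+1} a nondecreasing knot vector, P₁, …, P_{l−p} ∈ ℝ^d control points, and let k be an index with p + 1 ≤ k ≤ l − p and ū ∈ [u_k, u_{k+1}) a new knot. Let U† = (u₁, …, u_k, ū, u_{k+1}, …, u_{l+1}) be the refined knot vector (of length l + 2) with B-spline basis functions B†_{i,p}, and define new control points P†_i = α_i·P_i + (1 − α_i)·P_{i−1} for i = 1, …, l − p + 1, where α_i = 1 for 1 ≤ i ≤ k − p, α_i = (ū − u_i)/(u_{i+p} − u_i) for k − p + 1 ≤ i ≤ k, and α_i = 0 for k + 1 ≤ i ≤ l − p + 1 (the undefined terms P₀ and P_{l−p+1} never occur since α₁ = 1 and α_{l−p+1} = 0). Then Σ_{i=1}^{l−p} B_{i,p}(u)·P_i = Σ_{i=1}^{l−p+1} B†_{i,p}(u)·P†_i for every u ∈ [u_{p+1}, u_{l−p+1}). -/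

import Mathlib

open MeasureTheory Set Filter Topology Classical

/-- The Cox–de Boor B-spline basis functions `B_{i,p}` for the knot vector `U`
(indexed from 1), with the convention that any term with zero denominator is 0. -/
noncomputable def bspline (U : ℕ → ℝ) : ℕ → ℕ → ℝ → ℝ
  | 0, i, t => if U i ≤ t ∧ t < U (i + 1) then 1 else 0
  | p + 1, i, t =>
      (if U (i + p + 1) = U i then 0
        else (t - U i) / (U (i + p + 1) - U i) * bspline U p i t) +
      (if U (i + p + 2) = U (i + 1) then 0
        else (U (i + p + 2) - t) / (U (i + p + 2) - U (i + 1)) * bspline U p (i + 1) t)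


/-!
Boehm's relation `B_{i,q} = α_{i,q} B†_{i,q} + (1 - α_{i+1,q}) B†_{i+1,q}` holds in every degree `q`,
where `α_{i,q}` is `1`, `(ū - u_i)/(u_{i+q} - u_i)` or `0` according as `i + q ≤ k`, `i ≤ k < i + q`
or `k < i`. It is proved by induction on `q`: expanding both sides of the degree-`(q+1)` relation
with the Cox–de Boor recurrence, it reduces to one coefficient identity for each of
`B†_{i,q}, B†_{i+1,q}, B†_{i+2,q}`, which is checked according to the position of `k`. Whenever a
denominator in these identities can vanish, two knots of the corresponding `B†` coincide and that
B-spline is zero. Multiplying Boehm's relation by `P_i`, summing, and shifting the index of the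
second sum gives the curve identity; the boundary terms drop out because `α_1 = 1` and
`α_{l-p+1} = 0`.
-/

theorem monotoneOn_Icc_of_le_add_one {α : Type*} [Preorder α] {f : ℕ → α} {a b : ℕ}
    (hf : ∀ j, a ≤ j → j < b → f j ≤ f (j + 1)) : MonotoneOn f (Icc a b) :=
  monotoneOn_of_le_succ ordConnected_Icc fun j _ hj hj1 => by
    rw [Order.succ_eq_add_one] at hj1 ⊢
    exact hf j hj.1 (by simpa using hj1.2)

section BSpline

variable {V : ℕ → ℝ} {q i : ℕ} {t : ℝ}

theorem bspline_eq_zero_of_notMem_Ico (hV : MonotoneOn V (Icc i (i + q + 1)))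
    (ht : t ∉ Ico (V i) (V (i + q + 1))) : bspline V q i t = 0 := by
  induction q generalizing i with
  | zero => simpa [bspline] using ht
  | succ q ih =>
    have hleft : bspline V q i t = 0 := ih (hV.mono (Icc_subset_Icc le_rfl (by omega)))
      fun h => ht (Ico_subset_Ico le_rfl
        (hV ⟨by omega, by omega⟩ ⟨by omega, le_rfl⟩ (by omega)) h)
    have hright : bspline V q (i + 1) t = 0 := ih (hV.mono (Icc_subset_Icc (by omega) (by omega)))
      fun h => ht (Ico_subset_Ico (hV ⟨le_rfl, by omega⟩ ⟨by omega, by omega⟩ (by omega))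
        (by rw [show i + 1 + q + 1 = i + (q + 1) + 1 by ring]) h)
    simp [bspline, hleft, hright]

theorem bspline_eq_zero_of_le (hV : MonotoneOn V (Icc i (i + q + 1))) (h : V (i + q + 1) ≤ V i) :
    bspline V q i t = 0 :=
  bspline_eq_zero_of_notMem_Ico hV fun ht => (ht.1.trans_lt ht.2).not_ge h

/-- Cox–de Boor weight; Lean's `x / 0 = 0` gives the zero-denominator convention for free. -/
noncomputable def knotRatio (V : ℕ → ℝ) (q i : ℕ) (t : ℝ) : ℝ :=
  (t - V i) / (V (i + q) - V i)

theorem bspline_succ (hV : MonotoneOn V (Icc (i + 1) (i + q + 2))) :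
    bspline V (q + 1) i t = knotRatio V (q + 1) i t * bspline V q i t +
      (1 - knotRatio V (q + 1) (i + 1) t) * bspline V q (i + 1) t := by
  have hidx : i + 1 + q + 1 = i + q + 2 := by ring
  simp only [bspline, knotRatio, ← add_assoc, hidx]
  congr 1
  · split_ifs with h <;> simp [h]
  · split_ifs with h
    · rw [bspline_eq_zero_of_le (hidx ▸ hV) (hidx ▸ h.le), mul_zero]
    · rw [one_sub_div (sub_ne_zero.2 h)]
      ring

end BSpline

noncomputable def insertKnot (U : ℕ → ℝ) (k : ℕ) (ubar : ℝ) : ℕ → ℝ :=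
  fun j => if j ≤ k then U j else if j = k + 1 then ubar else U (j - 1)

noncomputable def insertionCoeff (U : ℕ → ℝ) (k : ℕ) (ubar : ℝ) (q i : ℕ) : ℝ :=
  if i + q ≤ k then 1 else if i ≤ k then knotRatio U q i ubar else 0

section KnotInsertion

variable {U : ℕ → ℝ} {k l : ℕ} {ubar : ℝ}

theorem insertKnot_of_le {j : ℕ} (hj : j ≤ k) : insertKnot U k ubar j = U j := if_pos hj

theorem insertKnot_of_eq {j : ℕ} (hj : j = k + 1) : insertKnot U k ubar j = ubar := by
  simp [insertKnot, hj]

theorem insertKnot_of_lt {j : ℕ} (hj : k + 1 < j) : insertKnot U k ubar j = U (j - 1) := by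
  simp [insertKnot, show ¬j ≤ k by omega, show j ≠ k + 1 by omega]

theorem insertionCoeff_of_le {q i : ℕ} (h : i + q ≤ k) : insertionCoeff U k ubar q i = 1 :=
  if_pos h

theorem insertionCoeff_of_mem {q i : ℕ} (hi : i ≤ k) (hk : k < i + q) :
    insertionCoeff U k ubar q i = knotRatio U q i ubar := by
  simp [insertionCoeff, hi, show ¬i + q ≤ k by omega]

theorem insertionCoeff_of_lt {q i : ℕ} (h : k < i) : insertionCoeff U k ubar q i = 0 := by
  simp [insertionCoeff, show ¬i + q ≤ k by omega, show ¬i ≤ k by omega]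

theorem monotoneOn_insertKnot (hU : MonotoneOn U (Icc 1 (l + 1)))
    (hubar : ubar ∈ Icc (U k) (U (k + 1))) (hk : k ≤ l) :
    MonotoneOn (insertKnot U k ubar) (Icc 1 (l + 2)) := by
  refine monotoneOn_Icc_of_le_add_one fun j hj hjl => ?_
  have hU' : ∀ a b, 1 ≤ a → a ≤ b → b ≤ l + 1 → U a ≤ U b :=
    fun a b ha hab hb => hU ⟨ha, by omega⟩ ⟨by omega, hb⟩ hab
  rcases (by omega : j + 1 ≤ k ∨ j = k ∨ j = k + 1 ∨ k + 1 < j) with h | rfl | rfl | h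
  · rw [insertKnot_of_le (by omega), insertKnot_of_le h]
    exact hU' _ _ hj (by omega) (by omega)
  · rw [insertKnot_of_le le_rfl, insertKnot_of_eq rfl]
    exact hubar.1
  · rw [insertKnot_of_eq rfl, insertKnot_of_lt (by omega), Nat.add_sub_cancel]
    exact hubar.2
  · rw [insertKnot_of_lt h, insertKnot_of_lt (by omega), Nat.add_sub_cancel]
    exact hU' _ _ (by omega) (by omega) (by omega)

theorem knot_le_ubar (hU : MonotoneOn U (Icc 1 (l + 1))) (hubar : U k ≤ ubar) {a : ℕ}
    (ha : 1 ≤ a) (hak : a ≤ k) (hk : k ≤ l + 1) : U a ≤ ubar :=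
  (hU ⟨ha, by omega⟩ ⟨by omega, hk⟩ hak).trans hubar

theorem ubar_lt_knot (hU : MonotoneOn U (Icc 1 (l + 1))) (hubar : ubar < U (k + 1)) {b : ℕ}
    (hkb : k < b) (hb : b ≤ l + 1) : ubar < U b :=
  hubar.trans_le (hU ⟨by omega, by omega⟩ ⟨by omega, hb⟩ hkb)

theorem knot_sub_ne_zero (hU : MonotoneOn U (Icc 1 (l + 1))) (hubar : ubar ∈ Ico (U k) (U (k + 1)))
    {a b : ℕ} (ha : 1 ≤ a) (hak : a ≤ k) (hkb : k < b) (hb : b ≤ l + 1) : U b - U a ≠ 0 :=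
  sub_ne_zero.2 ((knot_le_ubar hU hubar.1 ha hak (by omega)).trans_lt
    (ubar_lt_knot hU hubar.2 hkb hb)).ne'

theorem knot_sub_ubar_ne_zero (hU : MonotoneOn U (Icc 1 (l + 1))) (hubar : ubar < U (k + 1))
    {b : ℕ} (hkb : k < b) (hb : b ≤ l + 1) : U b - ubar ≠ 0 :=
  sub_ne_zero.2 (ubar_lt_knot hU hubar hkb hb).ne'

theorem bspline_zero_eq_insertionCoeff_mul_add (hubar : ubar ∈ Icc (U k) (U (k + 1))) (i : ℕ) (t : ℝ) :
    bspline U 0 i t = insertionCoeff U k ubar 0 i * bspline (insertKnot U k ubar) 0 i t +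
      (1 - insertionCoeff U k ubar 0 (i + 1)) * bspline (insertKnot U k ubar) 0 (i + 1) t := by
  rcases (by omega : i + 1 ≤ k ∨ i = k ∨ k < i) with h | rfl | h
  · simp (disch := omega) only [bspline, insertionCoeff_of_le, insertKnot_of_le]
    ring
  · simp (disch := omega) only [bspline, insertionCoeff_of_le, insertionCoeff_of_lt,
      insertKnot_of_le, insertKnot_of_eq, insertKnot_of_lt, Nat.add_sub_cancel]
    by_cases ht : t < ubar
    · simp [ht, ht.trans_le hubar.2, not_le.2 ht]
    · simp [ht, not_lt.1 ht, hubar.1.trans (not_lt.1 ht)]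
  · simp (disch := omega) only [bspline, insertionCoeff_of_lt, insertKnot_of_lt,
      Nat.add_sub_cancel]
    ring

/-! The next three identities compare the coefficients of `B†_{i,q}`, `B†_{i+1,q}` and
`B†_{i+2,q}` in the induction step of `bspline_eq_insertionCoeff_mul_add`. -/

theorem insertionCoeff_step_left (hU : MonotoneOn U (Icc 1 (l + 1)))
    (hubar : ubar ∈ Icc (U k) (U (k + 1))) (hk : k ≤ l) {q i : ℕ} (hi : 1 ≤ i)
    (hil : i + q + 1 ≤ l + 2) (t : ℝ) :
    knotRatio U (q + 1) i t * insertionCoeff U k ubar q i * bspline (insertKnot U k ubar) q i t =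
      insertionCoeff U k ubar (q + 1) i * knotRatio (insertKnot U k ubar) (q + 1) i t *
        bspline (insertKnot U k ubar) q i t := by
  rcases (by omega : i + q + 1 ≤ k ∨ k = i + q ∨ (i ≤ k ∧ k < i + q) ∨ k < i)
    with h | h | ⟨h₁, h₂⟩ | h
  · simp (disch := omega) only [insertionCoeff_of_le, knotRatio, insertKnot_of_le]
    ring
  · simp (disch := omega) only [insertionCoeff_of_le, insertionCoeff_of_mem, knotRatio,
      insertKnot_of_le, insertKnot_of_eq, ← add_assoc]
    by_cases hdeg : ubar = U i
    · rw [bspline_eq_zero_of_le, mul_zero, mul_zero]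
      · exact (monotoneOn_insertKnot hU hubar hk).mono (Icc_subset_Icc hi hil)
      · rw [insertKnot_of_eq (by omega), insertKnot_of_le (by omega), hdeg]
    · field_simp [sub_ne_zero.2 hdeg]
  · simp (disch := omega) only [insertionCoeff_of_mem, knotRatio, insertKnot_of_le,
      insertKnot_of_lt, ← add_assoc, Nat.add_sub_cancel]
    ring
  · simp (disch := omega) only [insertionCoeff_of_lt]
    ring

theorem insertionCoeff_step_mid (hU : MonotoneOn U (Icc 1 (l + 1)))
    (hubar : ubar ∈ Ico (U k) (U (k + 1))) (hk : k ≤ l) {q i : ℕ} (hi : 1 ≤ i)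
    (hil : i + q + 2 ≤ l + 1) (t : ℝ) :
    (knotRatio U (q + 1) i t * (1 - insertionCoeff U k ubar q (i + 1)) +
        (1 - knotRatio U (q + 1) (i + 1) t) * insertionCoeff U k ubar q (i + 1)) *
        bspline (insertKnot U k ubar) q (i + 1) t =
      (insertionCoeff U k ubar (q + 1) i * (1 - knotRatio (insertKnot U k ubar) (q + 1) (i + 1) t) +
        (1 - insertionCoeff U k ubar (q + 1) (i + 1)) *
          knotRatio (insertKnot U k ubar) (q + 1) (i + 1) t) *
        bspline (insertKnot U k ubar) q (i + 1) t := by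
  rcases (by omega : i + q + 2 ≤ k ∨ k = i + q + 1 ∨ (i + 1 ≤ k ∧ k ≤ i + q) ∨ k = i ∨ k < i)
    with h | h | ⟨h₁, h₂⟩ | h | h
  · simp (disch := omega) only [insertionCoeff_of_le, knotRatio, insertKnot_of_le]
    ring_nf
  · simp (disch := omega) only [insertionCoeff_of_le, insertionCoeff_of_mem, knotRatio,
      insertKnot_of_le, insertKnot_of_eq, ← add_assoc]
    by_cases hdeg : ubar = U (i + 1)
    · rw [bspline_eq_zero_of_le, mul_zero, mul_zero]
      · exact (monotoneOn_insertKnot hU (Ico_subset_Icc_self hubar) hk).mono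
          (Icc_subset_Icc (by omega) (by omega))
      · rw [insertKnot_of_eq (by omega), insertKnot_of_le (by omega), hdeg]
    · have hA := knot_sub_ne_zero hU hubar (a := i + 1) (b := i + q + 2) (by omega) (by omega)
        (by omega) hil
      have hB := sub_ne_zero.2 hdeg
      ring_nf at hA hB ⊢
      field_simp
      ring
  · have hA := knot_sub_ne_zero hU hubar (a := i + 1) (b := i + q + 1) (by omega) h₁ (by omega)
      (by omega)
    have hB := knot_sub_ne_zero hU hubar (a := i) (b := i + q + 1) hi (by omega) (by omega)
      (by omega)
    have hC := knot_sub_ne_zero hU hubar (a := i + 1) (b := i + q + 2) (by omega) h₁ (by omega)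
      hil
    simp (disch := omega) only [insertionCoeff_of_mem, knotRatio, insertKnot_of_le,
      insertKnot_of_lt, ← add_assoc, Nat.add_sub_cancel]
    ring_nf at hA hB hC ⊢
    field_simp
    ring
  · have hA := knot_sub_ne_zero hU hubar (a := i) (b := i + q + 1) hi (by omega) (by omega)
      (by omega)
    have hB := knot_sub_ubar_ne_zero hU hubar.2 (b := i + q + 1) (by omega) (by omega)
    simp (disch := omega) only [insertionCoeff_of_mem, insertionCoeff_of_lt, knotRatio,
      insertKnot_of_eq, insertKnot_of_lt, ← add_assoc, Nat.add_sub_cancel]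
    ring_nf at hA hB ⊢
    field_simp
    ring
  · simp (disch := omega) only [insertionCoeff_of_lt, knotRatio, insertKnot_of_lt, ← add_assoc,
      Nat.add_sub_cancel]
    ring_nf

theorem insertionCoeff_step_right (hU : MonotoneOn U (Icc 1 (l + 1)))
    (hubar : ubar ∈ Ico (U k) (U (k + 1))) {q i : ℕ} (hil : i + q + 2 ≤ l + 1) (t : ℝ) :
    (1 - knotRatio U (q + 1) (i + 1) t) * (1 - insertionCoeff U k ubar q (i + 1 + 1)) *
        bspline (insertKnot U k ubar) q (i + 1 + 1) t =
      (1 - insertionCoeff U k ubar (q + 1) (i + 1)) *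
        (1 - knotRatio (insertKnot U k ubar) (q + 1) (i + 1 + 1) t) *
        bspline (insertKnot U k ubar) q (i + 1 + 1) t := by
  rcases (by omega : i + q + 2 ≤ k ∨ (i + 2 ≤ k ∧ k < i + q + 2) ∨ k = i + 1 ∨ k ≤ i)
    with h | ⟨h₁, h₂⟩ | rfl | h
  · simp (disch := omega) only [insertionCoeff_of_le]
    ring
  · have hA := knot_sub_ne_zero hU hubar (a := i + 1) (b := i + q + 2) (by omega) (by omega) h₂ hil
    have hB := knot_sub_ne_zero hU hubar (a := i + 2) (b := i + q + 2) (by omega) h₁ h₂ hil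
    simp (disch := omega) only [insertionCoeff_of_mem, knotRatio, insertKnot_of_le,
      insertKnot_of_lt, ← add_assoc, Nat.add_sub_cancel]
    ring_nf at hA hB ⊢
    field_simp
    ring
  · have hA := knot_sub_ne_zero hU hubar (a := i + 1) (b := i + q + 2) (by omega) le_rfl (by omega) hil
    have hC := knot_sub_ubar_ne_zero hU hubar.2 (b := i + q + 2) (by omega) hil
    simp (disch := omega) only [insertionCoeff_of_mem, insertionCoeff_of_lt, knotRatio,
      insertKnot_of_eq, insertKnot_of_lt, ← add_assoc, Nat.add_sub_cancel]
    ring_nf at hA hC ⊢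
    field_simp
    ring
  · simp (disch := omega) only [insertionCoeff_of_lt, knotRatio, insertKnot_of_lt, ← add_assoc,
      Nat.add_sub_cancel]
    ring_nf

theorem bspline_eq_insertionCoeff_mul_add (hU : MonotoneOn U (Icc 1 (l + 1)))
    (hubar : ubar ∈ Ico (U k) (U (k + 1))) (hk : k ≤ l) (q : ℕ) {i : ℕ} (hi : 1 ≤ i)
    (hil : i + q ≤ l) (t : ℝ) :
    bspline U q i t = insertionCoeff U k ubar q i * bspline (insertKnot U k ubar) q i t +
      (1 - insertionCoeff U k ubar q (i + 1)) * bspline (insertKnot U k ubar) q (i + 1) t := by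
  induction q generalizing i with
  | zero => exact bspline_zero_eq_insertionCoeff_mul_add (Ico_subset_Icc_self hubar) i t
  | succ q ih =>
    have hU' := monotoneOn_insertKnot hU (Ico_subset_Icc_self hubar) hk
    rw [bspline_succ (hU.mono (Icc_subset_Icc (by omega) (by omega))), ih hi (by omega),
      ih (by omega : 1 ≤ i + 1) (by omega),
      bspline_succ (hU'.mono (Icc_subset_Icc (by omega) (by omega))),
      bspline_succ (hU'.mono (Icc_subset_Icc (by omega) (by omega)))]
    linear_combination
      insertionCoeff_step_left hU (Ico_subset_Icc_self hubar) hk (q := q) hi (by omega) t +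
      insertionCoeff_step_mid hU hubar hk (q := q) hi (by omega) t +
      insertionCoeff_step_right hU hubar (q := q) (i := i) (by omega) t

end KnotInsertion

theorem sum_Icc_smul_eq_sum_Icc_succ_smul {R M : Type*} [CommRing R] [AddCommGroup M] [Module R M]
    {n : ℕ} {a b c : ℕ → R} {P : ℕ → M}
    (hb : ∀ i ∈ Finset.Icc 1 n, b i = a i * c i + (1 - a (i + 1)) * c (i + 1))
    (ha₁ : a 1 = 1) (ha : a (n + 1) = 0) :
    ∑ i ∈ Finset.Icc 1 n, b i • P i =
      ∑ i ∈ Finset.Icc 1 (n + 1), c i • (a i • P i + (1 - a i) • P (i - 1)) := by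
  have hshift : ∀ f : ℕ → M,
      ∑ i ∈ Finset.Icc 1 (n + 1), f i = f 1 + ∑ i ∈ Finset.Icc 1 n, f (i + 1) := fun f => by
    rw [← Finset.insert_Icc_add_one_left_eq_Icc (by omega), Finset.sum_insert (by simp),
      ← Finset.map_add_right_Icc, Finset.sum_map]
    rfl
  simp only [smul_add, smul_smul, Finset.sum_add_distrib]
  rw [Finset.sum_Icc_succ_top (by omega), hshift, ha, ha₁, Finset.sum_congr rfl
    (fun i hi => by rw [hb i hi, add_smul])]
  simp [Finset.sum_add_distrib, mul_comm]

theorem bspline_knot_insertion_general (p l k d : ℕ) (U : ℕ → ℝ) (P : ℕ → Fin d → ℝ)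
    (hU : ∀ j, 1 ≤ j → j ≤ l → U j ≤ U (j + 1))
    (hk1 : p + 1 ≤ k) (hk2 : k ≤ l - p)
    (ubar : ℝ) (hubar : ubar ∈ Set.Ico (U k) (U (k + 1)))
    (U' : ℕ → ℝ)
    (hU' : U' = fun j => if j ≤ k then U j else if j = k + 1 then ubar else U (j - 1))
    (α : ℕ → ℝ)
    (hα : α = fun i => if i ≤ k - p then 1
      else if i ≤ k then (ubar - U i) / (U (i + p) - U i) else 0)
    (P' : ℕ → Fin d → ℝ)
    (hP' : P' = fun i => α i • P i + (1 - α i) • P (i - 1)) :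
    ∀ t ∈ Set.Ico (U (p + 1)) (U (l - p + 1)),
      ∑ i ∈ Finset.Icc 1 (l - p), bspline U p i t • P i =
        ∑ i ∈ Finset.Icc 1 (l - p + 1), bspline U' p i t • P' i := by
  intro t _
  have hmono : MonotoneOn U (Icc 1 (l + 1)) :=
    monotoneOn_Icc_of_le_add_one fun j hj hjl => hU j hj (by omega)
  have hα' : α = insertionCoeff U k ubar p := by
    funext i
    simp only [hα, insertionCoeff, knotRatio, Nat.le_sub_iff_add_le (by omega : p ≤ k)]
  subst hU' hP'
  rw [hα']
  exact sum_Icc_smul_eq_sum_Icc_succ_smul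
    (fun i hi => bspline_eq_insertionCoeff_mul_add hmono hubar (by omega) p
      (Finset.mem_Icc.1 hi).1 (by have := (Finset.mem_Icc.1 hi).2; omega) t)
    (insertionCoeff_of_le (by omega)) (insertionCoeff_of_lt (by omega))

theorem bspline_knot_insertion (p l k d : ℕ) (U : ℕ → ℝ) (P : ℕ → Fin d → ℝ)
    (hp : 1 ≤ p)
    (hU : ∀ j, 1 ≤ j → j ≤ l → U j ≤ U (j + 1))
    (hk1 : p + 1 ≤ k) (hk2 : k ≤ l - p)
    (ubar : ℝ) (hubar : ubar ∈ Set.Ico (U k) (U (k + 1)))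
    (U' : ℕ → ℝ)
    (hU' : U' = fun j => if j ≤ k then U j else if j = k + 1 then ubar else U (j - 1))
    (α : ℕ → ℝ)
    (hα : α = fun i => if i ≤ k - p then 1
      else if i ≤ k then (ubar - U i) / (U (i + p) - U i) else 0)
    (P' : ℕ → Fin d → ℝ)
    (hP' : P' = fun i => α i • P i + (1 - α i) • P (i - 1)) :
    ∀ t ∈ Set.Ico (U (p + 1)) (U (l - p + 1)),
      ∑ i ∈ Finset.Icc 1 (l - p), bspline U p i t • P i =
        ∑ i ∈ Finset.Icc 1 (l - p + 1), bspline U' p i t • P' i :=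
  bspline_knot_insertion_general p l k d U P hU hk1 hk2 ubar hubar U' hU' α hα P' hP'
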